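/- arXiv:2309.12174 — 7 statements merged into one kernel-verified Lean document; each statement's English description precedes it below -/
import Mathlib

section
/- Let n be a positive integer, let a be a nonzero real number, let V be an n×n complex matrix that is unitary (V† V = 1), and set D = a⁻¹ • (1 + V). Then D + D† = a • (D† * D) and D + D† = a • (D * D†) (the Ginsparg–Wilson relation in anti-hermiticity form). -/
open Matrix

theorem stmt_0 {n : ℕ} (hn : 0 < n) (a : ℝ) (ha : a ≠ 0)
    (V : Matrix (Fin n) (Fin n) ℂ) (hV : Vᴴ * V = 1)
    (D : Matrix (Fin n) (Fin n) ℂ) (hD : D = a⁻¹ • (1 + V)) :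
    D + Dᴴ = a • (Dᴴ * D) ∧ D + Dᴴ = a • (D * Dᴴ) := by
  have hV' : V * Vᴴ = 1 := mul_eq_one_comm.mp hV
  have hDh : Dᴴ = a⁻¹ • (1 + Vᴴ) := by
    simp [hD, conjTranspose_smul]
  constructor
  · rw [hDh, hD, Matrix.smul_mul, Matrix.mul_smul, smul_smul, smul_smul,
      mul_inv_cancel₀ ha, one_mul, mul_add, add_mul, add_mul, one_mul, mul_one, hV, one_mul]
    module
  · rw [hDh, hD, Matrix.smul_mul, Matrix.mul_smul, smul_smul, smul_smul,
      mul_inv_cancel₀ ha, one_mul, mul_add, add_mul, add_mul, one_mul, mul_one, hV', one_mul]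
    module
end

section
/- Let n be a positive integer, a a nonzero real number, V an n×n unitary complex matrix, and C an n×n unitary complex matrix satisfying C V C⁻¹ = V*, where V* denotes entrywise complex conjugation. Then for D = a⁻¹ • (1 + V) one has C D + Dᵀ C = a • (Dᵀ * C * D) (the Ginsparg–Wilson relation associated with charge-conjugation symmetry 𝒞). -/
open Matrix

theorem stmt_2 {n : ℕ} (hn : 0 < n) (a : ℝ) (ha : a ≠ 0)
    (V : Matrix (Fin n) (Fin n) ℂ) (hV : Vᴴ * V = 1)
    (C : Matrix (Fin n) (Fin n) ℂ) (hC : Cᴴ * C = 1 ∧ C * Cᴴ = 1)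
    (hCV : C * V * C⁻¹ = V.map (starRingEnd ℂ))
    (D : Matrix (Fin n) (Fin n) ℂ) (hD : D = a⁻¹ • (1 + V)) :
    C * D + Dᵀ * C = a • (Dᵀ * C * D) := by
  have hinv : C⁻¹ = Cᴴ := Matrix.inv_eq_left_inv hC.1
  have hC2 : C * V = V.map (starRingEnd ℂ) * C := by
    have := congrArg (· * C) hCV
    simpa [hinv, mul_assoc, hC.1] using this
  have hK : Vᵀ * V.map (starRingEnd ℂ) = 1 := by
    have := congrArg (fun M => M.map (starRingEnd ℂ)) hV
    simp only [Matrix.map_mul, Matrix.map_one] at this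
    have h2 : Vᴴ.map (starRingEnd ℂ) = Vᵀ := by
      ext i j; simp [Matrix.conjTranspose]
    rw [h2] at this
    rw [this]
    ext i j; simp [Matrix.one_apply, apply_ite]
  have h1 : Vᵀ * C * V = C := by
    rw [mul_assoc, hC2, ← mul_assoc, hK, one_mul]
  subst hD
  rw [transpose_smul, transpose_add, transpose_one]
  rw [smul_mul_assoc, smul_mul_assoc, mul_smul_comm, mul_smul_comm]
  rw [smul_smul, mul_inv_cancel₀ ha, one_smul, ← smul_add]
  congr 1
  have : (1 + Vᵀ) * C * (1 + V) = C * (1 + V) + (1 + Vᵀ) * C := by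
    simp only [mul_add, add_mul, mul_one, one_mul]
    rw [h1]
    abel
  rw [this]
end

section
/- Let n be a positive integer, a a nonzero real number, V an n×n unitary complex matrix, and T an n×n unitary complex matrix satisfying T V T⁻¹ = Vᵀ. Then for D = a⁻¹ • (1 + V) one has T D + D* T = a • (D* * T * D), where D* denotes entrywise complex conjugation (the Ginsparg–Wilson relation associated with time-reversal symmetry 𝒯). -/
open Matrix

theorem stmt_3 {n : ℕ} (hn : 0 < n) (a : ℝ) (ha : a ≠ 0)
    (V : Matrix (Fin n) (Fin n) ℂ) (hV : Vᴴ * V = 1)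
    (T : Matrix (Fin n) (Fin n) ℂ) (hT : Tᴴ * T = 1 ∧ T * Tᴴ = 1)
    (hTV : T * V * T⁻¹ = Vᵀ)
    (D : Matrix (Fin n) (Fin n) ℂ) (hD : D = a⁻¹ • (1 + V)) :
    T * D + D.map (starRingEnd ℂ) * T = a • (D.map (starRingEnd ℂ) * T * D) := by
  set c := starRingEnd ℂ
  have hTinv : T⁻¹ = Tᴴ := Matrix.inv_eq_right_inv hT.2
  have hTVT : T * V = Vᵀ * T := by
    have := congrArg (· * T) hTV
    simpa [hTinv, Matrix.mul_assoc, hT.1] using this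
  have hVVH : V * Vᴴ = 1 := mul_eq_one_comm.mp hV
  have hcc : V.map c * Vᵀ = 1 := by
    have : (Vᴴ)ᵀ = V.map c := by
      ext i j; simp [Matrix.conjTranspose_apply, c]
    calc V.map c * Vᵀ = (Vᴴ)ᵀ * Vᵀ := by rw [this]
      _ = (V * Vᴴ)ᵀ := by rw [Matrix.transpose_mul]
      _ = 1 := by rw [hVVH, Matrix.transpose_one]
  have key : V.map c * (T * V) = T := by
    rw [hTVT, ← Matrix.mul_assoc, hcc, Matrix.one_mul]
  have hDc : D.map c = a⁻¹ • (1 + V.map c) := by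
    subst hD
    ext i j
    simp [Matrix.map_apply, Matrix.add_apply, Matrix.smul_apply, Matrix.one_apply, c]
    split <;> simp
  subst hD
  rw [hDc]
  rw [Matrix.mul_smul, Matrix.smul_mul, Matrix.smul_mul, Matrix.mul_smul,
    smul_smul, smul_smul]
  rw [mul_inv_cancel₀ ha, one_mul]
  rw [← smul_add]
  congr 1
  have expand : (1 + V.map c) * T * (1 + V) =
      T + T * V + V.map c * T + V.map c * (T * V) := by
    noncomm_ring
  rw [expand, key]
  noncomm_ring
end

section
/- Let V be a 2×2 real orthogonal matrix and let D = 1 + V. Then (-1)^ν = det V, where ν is the dimension of the kernel of the linear map ℝ² → ℝ² induced by D. -/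
/-!
Since `V * Vᵀ = 1` we have `1 + V = V * (1 + V)ᵀ`, hence `det (1 + V) = det V * det (1 + V)`.
If `det V = -1`, this forces `1 + V` to be singular, while `1 + V ≠ 0` because `det (-1) = 1` in
dimension two; so the kernel is a line. If `det V = 1`, then `Vᵀ = adjugate V`, and the 2×2
Cayley–Hamilton identity `V + adjugate V = trace V • 1` gives `(1 + V)ᵀ * (1 + V) = (2 + trace V) • 1`.
Over `ℝ` the kernels of `D` and `Dᵀ * D` agree, so the kernel is `0` or all of `ℝ²`.
-/

open Matrix

namespace Matrix

variable {n R K : Type*} [Fintype n] [DecidableEq n]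

section CommRing

variable [CommRing R]

theorem det_eq_one_or_neg_one_of_mul_transpose_eq_one [NoZeroDivisors R] {V : Matrix n n R}
    (hV : V * Vᵀ = 1) : V.det = 1 ∨ V.det = -1 :=
  mul_self_eq_one_iff.mp <| by simpa [det_transpose] using congrArg det hV

theorem det_one_add_eq_det_mul_det_one_add {V : Matrix n n R} (hV : V * Vᵀ = 1) :
    (1 + V).det = V.det * (1 + V).det := by
  have h : 1 + V = V * (1 + V)ᵀ := by
    rw [transpose_add, transpose_one, Matrix.mul_add, Matrix.mul_one, hV, add_comm]
  conv_lhs => rw [h, det_mul, det_transpose]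

theorem adjugate_eq_det_smul_transpose {V : Matrix n n R} (hV : V * Vᵀ = 1) :
    adjugate V = V.det • Vᵀ :=
  calc adjugate V = adjugate V * (V * Vᵀ) := by rw [hV, Matrix.mul_one]
    _ = V.det • Vᵀ := by rw [← Matrix.mul_assoc, adjugate_mul, smul_one_mul]

theorem add_adjugate_fin_two (A : Matrix (Fin 2) (Fin 2) R) : A + adjugate A = A.trace • 1 := by
  ext i j
  fin_cases i <;> fin_cases j <;> simp [adjugate_fin_two, trace_fin_two, add_comm]

theorem transpose_one_add_mul_one_add_of_det_eq_one {V : Matrix (Fin 2) (Fin 2) R}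
    (hVtV : Vᵀ * V = 1) (hVVt : V * Vᵀ = 1) (hdet : V.det = 1) :
    (1 + V)ᵀ * (1 + V) = (2 + V.trace) • 1 := by
  have hadj : Vᵀ = adjugate V := by rw [adjugate_eq_det_smul_transpose hVVt, hdet, one_smul]
  calc (1 + V)ᵀ * (1 + V) = (2 : R) • 1 + (V + adjugate V) := by
        rw [transpose_add, transpose_one, add_mul, Matrix.mul_add, Matrix.mul_add, hVtV, ← hadj,
          two_smul]
        simp only [Matrix.one_mul, Matrix.mul_one]
        abel
    _ = (2 + V.trace) • 1 := by rw [add_adjugate_fin_two, add_smul]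

end CommRing

section Field

variable [Field K]

theorem ker_mulVecLin_smul_one {c : K} (hc : c ≠ 0) :
    LinearMap.ker (c • 1 : Matrix n n K).mulVecLin = ⊥ := by
  ext v
  simp [hc]

theorem finrank_ker_mulVecLin_fin_two_eq_one {D : Matrix (Fin 2) (Fin 2) K} (hdet : D.det = 0)
    (hD : D ≠ 0) : Module.finrank K (LinearMap.ker D.mulVecLin) = 1 := by
  have hne_zero : Module.finrank K (LinearMap.ker D.mulVecLin) ≠ 0 := by
    rw [Ne, Submodule.finrank_eq_zero]
    obtain ⟨v, hv, hDv⟩ := exists_mulVec_eq_zero_iff.mpr hdet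
    exact fun hbot => hv <| (Submodule.eq_bot_iff _).mp hbot v hDv
  have hne_two : Module.finrank K (LinearMap.ker D.mulVecLin) ≠ 2 := fun h2 =>
    hD <| Matrix.toLin'.map_eq_zero_iff.mp <| LinearMap.ker_eq_top.mp <|
      Submodule.eq_top_of_finrank_eq <| by rw [toLin'_apply', h2, Module.finrank_fin_fun]
  have hle := Submodule.finrank_le (LinearMap.ker D.mulVecLin)
  rw [Module.finrank_fin_fun] at hle
  omega

end Field

end Matrix

theorem stmt_4 (V : Matrix (Fin 2) (Fin 2) ℝ) (hV : Vᵀ * V = 1 ∧ V * Vᵀ = 1)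
    (D : Matrix (Fin 2) (Fin 2) ℝ) (hD : D = 1 + V) :
    (-1 : ℝ) ^ (Module.finrank ℝ (LinearMap.ker D.mulVecLin)) = V.det := by
  obtain ⟨hVtV, hVVt⟩ := hV
  subst hD
  rcases det_eq_one_or_neg_one_of_mul_transpose_eq_one hVVt with hdet | hdet
  · rw [hdet, ← ker_mulVecLin_transpose_mul_self,
      transpose_one_add_mul_one_add_of_det_eq_one hVtV hVVt hdet]
    rcases eq_or_ne (2 + V.trace) 0 with htr | htr
    · rw [htr, zero_smul, mulVecLin_zero, LinearMap.ker_zero, finrank_top, Module.finrank_fin_fun]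
      norm_num
    · rw [ker_mulVecLin_smul_one htr, finrank_bot, pow_zero]
  · have hdetD : (1 + V).det = 0 := by
      have := det_one_add_eq_det_mul_det_one_add hVVt
      rw [hdet, neg_one_mul, self_eq_neg] at this
      exact this
    have hD : 1 + V ≠ 0 := fun h => by
      rw [← neg_eq_iff_add_eq_zero.mpr h, det_neg] at hdet
      norm_num at hdet
    rw [hdet, finrank_ker_mulVecLin_fin_two_eq_one hdetD hD, pow_one]
end

section
/- Let n be a positive integer, let V be an n×n real orthogonal matrix, and let D = 1 + V. Then (-1)^ν = det V, where ν is the dimension of the kernel of the linear map ℝⁿ → ℝⁿ induced by D (the mod-two index theorem for the overlap Dirac operator). -/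
open Matrix Polynomial Finset

theorem stmt_5 {n : ℕ} (hn : 0 < n)
    (V : Matrix (Fin n) (Fin n) ℝ) (hV : Vᵀ * V = 1 ∧ V * Vᵀ = 1)
    (D : Matrix (Fin n) (Fin n) ℝ) (hD : D = 1 + V) :
    (-1 : ℝ) ^ (Module.finrank ℝ (LinearMap.ker D.mulVecLin)) = V.det := by
  classical
  obtain ⟨hV1, hV2⟩ := hV
  subst hD
  set ν := Module.finrank ℝ (LinearMap.ker (1 + V).mulVecLin) with hνdef
  set A : Matrix (Fin n) (Fin n) ℝ := (1 + V)ᵀ * (1 + V) with hAdef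
  have hA : A.IsHermitian := by
    have h := Matrix.isHermitian_conjTranspose_mul_self (1 + V)
    rwa [conjTranspose_eq_transpose_of_trivial] at h
  set α : Fin n → ℝ := hA.eigenvalues with hα
  have hαnn : ∀ i, 0 ≤ α i := by
    intro i
    have hPSD : A.PosSemidef := by
      have h := Matrix.posSemidef_conjTranspose_mul_self (1 + V)
      rwa [conjTranspose_eq_transpose_of_trivial] at h
    exact hPSD.eigenvalues_nonneg i
  -- kernel dimension equals number of zero eigenvalues
  have hkerAD := Matrix.ker_mulVecLin_transpose_mul_self (1 + V)
  have hrn : A.rank + ν = n := by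
    have h1 := LinearMap.finrank_range_add_finrank_ker A.mulVecLin
    rw [hkerAD, ← hνdef] at h1
    simpa [Matrix.rank, Module.finrank_pi] using h1
  have hrank : A.rank = (univ.filter fun i => ¬ α i = 0).card := by
    rw [hA.rank_eq_card_non_zero_eigs, Fintype.card_subtype]
  have hν : ν = (univ.filter fun i => α i = 0).card := by
    have h2 := Finset.card_filter_add_card_filter_not
      (s := (univ : Finset (Fin n))) (p := fun i => α i = 0)
    rw [Finset.card_univ, Fintype.card_fin] at h2
    omega
  -- spectral decomposition
  set U : Matrix (Fin n) (Fin n) ℝ := (hA.eigenvectorUnitary : Matrix (Fin n) (Fin n) ℝ) with hU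
  have hUU : U * star U = 1 := Matrix.mem_unitaryGroup_iff.mp hA.eigenvectorUnitary.2
  have hspec : A = U * Matrix.diagonal α * star U := by
    have h := hA.spectral_theorem
    simpa using h
  have hAexp : A = (1 : Matrix (Fin n) (Fin n) ℝ) + 1 + V + Vᵀ := by
    have h : (1 + V)ᵀ * (1 + V) = 1 + V + Vᵀ + Vᵀ * V := by
      rw [transpose_add, transpose_one]
      noncomm_ring
    rw [hAdef, h, hV1]
    abel
  -- the key determinant identity
  have hfac : ∀ t : ℝ,
      ((t • 1 + V : Matrix (Fin n) (Fin n) ℝ)).det ^ 2 = ∏ i, ((t - 1) ^ 2 + α i * t) := by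
    intro t
    have h2 : (t • (1 : Matrix (Fin n) (Fin n) ℝ) + V) * (t • 1 + Vᵀ)
        = ((t - 1) ^ 2) • (1 : Matrix (Fin n) (Fin n) ℝ) + t • A := by
      rw [hAexp]
      simp only [add_mul, mul_add, smul_mul_assoc, mul_smul_comm, one_mul, mul_one,
        smul_smul, hV2]
      module
    have h3 : ((t - 1) ^ 2) • (1 : Matrix (Fin n) (Fin n) ℝ) + t • A
        = U * Matrix.diagonal (fun i => (t - 1) ^ 2 + α i * t) * star U := by
      have hd : Matrix.diagonal (fun i => (t - 1) ^ 2 + α i * t)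
          = ((t - 1) ^ 2) • (1 : Matrix (Fin n) (Fin n) ℝ) + t • Matrix.diagonal α := by
        ext i j
        by_cases hij : i = j
        · subst hij
          simp [Matrix.one_apply, mul_comm]
        · simp [Matrix.diagonal_apply_ne _ hij, Matrix.one_apply_ne hij]
      calc ((t - 1) ^ 2) • (1 : Matrix (Fin n) (Fin n) ℝ) + t • A
          = ((t - 1) ^ 2) • (U * 1 * star U) + t • (U * Matrix.diagonal α * star U) := by
            rw [mul_one, hUU, ← hspec]
        _ = U * Matrix.diagonal (fun i => (t - 1) ^ 2 + α i * t) * star U := by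
            rw [hd]
            simp only [mul_add, add_mul, mul_smul_comm, smul_mul_assoc]
    have hdetU : U.det * (star U).det = 1 := by
      have h := congrArg Matrix.det hUU
      rwa [Matrix.det_mul, Matrix.det_one] at h
    have htr : (t • (1 : Matrix (Fin n) (Fin n) ℝ) + V)ᵀ = t • 1 + Vᵀ := by
      rw [transpose_add, transpose_smul, transpose_one]
    calc ((t • 1 + V : Matrix (Fin n) (Fin n) ℝ)).det ^ 2
        = ((t • 1 + V : Matrix (Fin n) (Fin n) ℝ) * (t • 1 + Vᵀ)).det := by
          rw [Matrix.det_mul, ← htr, Matrix.det_transpose, sq]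
      _ = (U * Matrix.diagonal (fun i => (t - 1) ^ 2 + α i * t) * star U).det := by
          rw [h2, h3]
      _ = (Matrix.diagonal (fun i => (t - 1) ^ 2 + α i * t)).det := by
          rw [Matrix.det_mul, Matrix.det_mul]
          linear_combination (Matrix.diagonal (fun i => (t - 1) ^ 2 + α i * t)).det * hdetU
      _ = ∏ i, ((t - 1) ^ 2 + α i * t) := Matrix.det_diagonal
  -- the polynomial P with eval t = det (t • 1 + V)
  set P : Polynomial ℝ := (-V).charpoly with hP
  have hPmonic : P.Monic := Matrix.charpoly_monic _
  have hP0 : P ≠ 0 := hPmonic.ne_zero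
  have hPeval : ∀ t : ℝ, P.eval t = ((t • 1 + V : Matrix (Fin n) (Fin n) ℝ)).det := by
    intro t
    have h := (Polynomial.evalRingHom t).map_det (charmatrix (-V))
    simp only [coe_evalRingHom] at h
    rw [hP, Matrix.charpoly, h]
    congr 1
    ext i j
    rcases eq_or_ne i j with rfl | hij
    · simp [charmatrix_apply_eq, Matrix.one_apply, Matrix.map_apply]
    · simp [charmatrix_apply_ne _ _ _ hij, Matrix.one_apply_ne hij, Matrix.map_apply]
  set s : Finset (Fin n) := univ.filter (fun i => ¬ α i = 0) with hs
  set R0 : Polynomial ℝ := ∏ i ∈ s, ((X - 1) ^ 2 + C (α i) * X) with hR0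
  have hPP : P * P = (X - 1) ^ (2 * ν) * R0 := by
    apply Polynomial.funext
    intro t
    have hsplit : ∏ i, ((t - 1) ^ 2 + α i * t)
        = (t - 1) ^ (2 * ν) * ∏ i ∈ s, ((t - 1) ^ 2 + α i * t) := by
      rw [← Finset.prod_filter_mul_prod_filter_not univ (fun i => α i = 0)
        (fun i => (t - 1) ^ 2 + α i * t)]
      congr 1
      rw [Finset.prod_congr rfl (fun i hi => by
          rw [(Finset.mem_filter.mp hi).2, zero_mul, add_zero]),
        Finset.prod_const, ← hν, ← pow_mul]
    have hevR : R0.eval t = ∏ i ∈ s, ((t - 1) ^ 2 + α i * t) := by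
      rw [hR0, eval_prod]
      exact Finset.prod_congr rfl (fun i _ => by simp)
    have h : P.eval t * P.eval t = (t - 1) ^ (2 * ν) * R0.eval t := by
      rw [← pow_two, hPeval, hfac, hsplit, hevR]
    simpa using h
  have hR0_1 : ¬ R0.IsRoot 1 := by
    have h : R0.eval 1 ≠ 0 := by
      rw [hR0, eval_prod]
      rw [Finset.prod_ne_zero_iff]
      intro i hi
      have hαi : ¬ α i = 0 := (Finset.mem_filter.mp hi).2
      simpa using hαi
    exact h
  have hrmP : P.rootMultiplicity 1 = ν := by
    have h1 : (P * P).rootMultiplicity 1 = P.rootMultiplicity 1 + P.rootMultiplicity 1 :=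
      Polynomial.rootMultiplicity_mul (mul_ne_zero hP0 hP0)
    have h2 : (P * P).rootMultiplicity 1 = 2 * ν := by
      rw [hPP, Polynomial.rootMultiplicity_mul
        (by rw [← hPP]; exact mul_ne_zero hP0 hP0)]
      have hx : (X - 1 : Polynomial ℝ) = X - C 1 := by rw [Polynomial.C_1]
      rw [hx, Polynomial.rootMultiplicity_X_sub_C_pow,
        Polynomial.rootMultiplicity_eq_zero hR0_1, add_zero]
    omega
  obtain ⟨Q, hQfac, hQnd⟩ := P.exists_eq_pow_rootMultiplicity_mul_and_not_dvd hP0 1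
  rw [hrmP] at hQfac
  have hQ1 : Q.eval 1 ≠ 0 := fun h => hQnd (Polynomial.dvd_iff_isRoot.mpr h)
  have hQev : ∀ t : ℝ, P.eval t = (t - 1) ^ ν * Q.eval t := by
    intro t
    rw [hQfac]
    simp
  have hQmonic : Q.Monic :=
    ((monic_X_sub_C (1 : ℝ)).pow ν).of_mul_monic_left (hQfac ▸ hPmonic)
  have hR0pos : ∀ t : ℝ, 0 ≤ t → 0 < R0.eval t := by
    intro t ht
    rw [hR0, eval_prod]
    apply Finset.prod_pos
    intro i hi
    have hαi : ¬ α i = 0 := (Finset.mem_filter.mp hi).2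
    have h0 : 0 < α i := lt_of_le_of_ne (hαnn i) (Ne.symm hαi)
    simp only [eval_add, eval_pow, eval_sub, eval_X, eval_one, eval_mul, eval_C]
    rcases ht.eq_or_lt with h | h
    · rw [← h]; norm_num
    · have hp : 0 < α i * t := mul_pos h0 h
      nlinarith [sq_nonneg (t - 1)]
  have hQne : ∀ t : ℝ, 0 ≤ t → Q.eval t ≠ 0 := by
    intro t ht
    rcases eq_or_ne t 1 with rfl | hne
    · exact hQ1
    · have h1 : P.eval t * P.eval t = (t - 1) ^ (2 * ν) * R0.eval t := by
        have h := congrArg (Polynomial.eval t) hPP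
        simpa using h
      rw [hQev t] at h1
      have hy : ((t - 1) : ℝ) ^ (2 * ν) ≠ 0 := pow_ne_zero _ (sub_ne_zero.mpr hne)
      have h2 : Q.eval t * Q.eval t = R0.eval t := by
        refine mul_left_cancel₀ hy ?_
        rw [← h1]
        ring
      intro hzero
      have hpos := hR0pos t ht
      rw [← h2, hzero, mul_zero] at hpos
      exact lt_irrefl 0 hpos
  have hQpos0 : 0 < Q.eval 0 := by
    by_contra hle
    push_neg at hle
    have h0 : Q.eval 0 < 0 := lt_of_le_of_ne hle (hQne 0 le_rfl)
    have hdeg : 0 < Q.degree := by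
      by_contra hd
      push_neg at hd
      have hc : Q = C (Q.coeff 0) := Polynomial.eq_C_of_degree_le_zero hd
      have hcoeff : Q.coeff 0 = 1 := by
        have hlc := hQmonic.leadingCoeff
        rwa [Polynomial.leadingCoeff, Polynomial.natDegree_eq_zero_iff_degree_le_zero.mpr hd] at hlc
      have : Q.eval 0 = 1 := by rw [hc, eval_C, hcoeff]
      rw [this] at h0
      linarith
    have htop := Q.tendsto_atTop_of_leadingCoeff_nonneg hdeg
      (by rw [hQmonic.leadingCoeff]; norm_num)
    obtain ⟨T, hT1, hT0⟩ :=
      ((htop.eventually_ge_atTop 1).and (Filter.eventually_ge_atTop 0)).exists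
    have hmem : (0 : ℝ) ∈ Set.Icc (Q.eval 0) (Q.eval T) := ⟨h0.le, by linarith⟩
    obtain ⟨c, hc, hceq⟩ :=
      intermediate_value_Icc hT0 (Q.continuous.continuousOn) hmem
    exact hQne c hc.1 hceq
  have hdetV : V.det = P.eval 0 := by
    rw [hPeval 0]
    simp
  have hdet2 : V.det * V.det = 1 := by
    have h := congrArg Matrix.det hV1
    rwa [Matrix.det_mul, Matrix.det_transpose, Matrix.det_one] at h
  have h1 : V.det = (-1 : ℝ) ^ ν * Q.eval 0 := by
    rw [hdetV, hQev 0]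
    norm_num
  have hsgn : ((-1 : ℝ) ^ ν) * ((-1 : ℝ) ^ ν) = 1 := by
    rw [← mul_pow]
    norm_num
  have h2 : ((-1 : ℝ) ^ ν * Q.eval 0) * ((-1 : ℝ) ^ ν * Q.eval 0) = 1 := by
    rw [← h1]
    exact hdet2
  have h3 : Q.eval 0 * Q.eval 0 = 1 := by
    linear_combination h2 - (Q.eval 0 * Q.eval 0) * hsgn
  have h4 : (Q.eval 0 - 1) * (Q.eval 0 + 1) = 0 := by linear_combination h3
  have hQ0 : Q.eval 0 = 1 := by
    rcases mul_eq_zero.mp h4 with h | h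
    · linarith
    · linarith
  rw [h1, hQ0, mul_one]
end

section
/- Let γ and Γ be n×n complex Hermitian matrices with γ² = 1, Γ² = 1, and γ Γ = - Γ γ, and let H be an invertible Hermitian matrix satisfying the chiral symmetry relation Γ H Γ = -H. Then the unitary operator V = γ · sgn(H) satisfies Γ V Γ = V. -/
open Matrix
open scoped ComplexOrder

/-- The positive semidefinite square root of a positive semidefinite matrix (as defined in
Mathlib of December 2024, since removed). -/
noncomputable def Matrix.PosSemidef.sqrt {n : Type*} [Fintype n] [DecidableEq n] {𝕜 : Type*}
    [RCLike 𝕜] {A : Matrix n n 𝕜} (hA : A.PosSemidef) : Matrix n n 𝕜 :=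
  hA.1.eigenvectorUnitary.1 * diagonal ((↑) ∘ (√·) ∘ hA.1.eigenvalues) *
  (star hA.1.eigenvectorUnitary : Matrix n n 𝕜)

/-- The matrix sign `sgn H = H * (√(H²))⁻¹` of a Hermitian matrix, where `√(H²)` is the
positive semidefinite square root of `H²`. -/
noncomputable def matrixSign {n : ℕ} (H : Matrix (Fin n) (Fin n) ℂ) (hH : H.IsHermitian) :
    Matrix (Fin n) (Fin n) ℂ :=
  H * ((show (H * H).PosSemidef by
      simpa [hH.eq] using Matrix.posSemidef_conjTranspose_mul_self H).sqrt)⁻¹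

/-!
Conjugation by `Γ` is an involutive algebra automorphism. It fixes `H²`, because it negates `H`,
so it fixes the functional-calculus square root `√(H²)` and its inverse; hence it negates
`sgn H = H (√(H²))⁻¹`. It also negates `γ`, so it fixes the product `V = γ sgn H`.
-/

section Anticommute

variable {R : Type*} [Ring R] {a b c : R}

theorem anticommute_of_mul_mul_eq_neg (ha : a * a = 1) (h : a * b * a = -b) :
    a * b = -(b * a) := by
  rw [← neg_mul, ← h, mul_assoc, ha, mul_one]

theorem commute_mul_of_anticommute (hb : a * b = -(b * a)) (hc : a * c = -(c * a)) :
    Commute a (b * c) := by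
  rw [commute_iff_eq, ← mul_assoc, hb, neg_mul, mul_assoc, hc, mul_neg, neg_neg, mul_assoc]

theorem anticommute_mul_of_commute (hb : a * b = -(b * a)) (hc : Commute a c) :
    a * (b * c) = -(b * c * a) := by
  rw [← mul_assoc, hb, neg_mul, mul_assoc, hc.eq, mul_assoc]

theorem mul_mul_eq_of_commute (ha : a * a = 1) (h : Commute a b) : a * b * a = b := by
  rw [h.eq, mul_assoc, ha, mul_one]

end Anticommute

theorem Matrix.commute_nonsing_inv_right {n α : Type*} [Fintype n] [DecidableEq n] [CommRing α]
    {A B : Matrix n n α} (hA : IsUnit A) (h : Commute A B) : Commute A B⁻¹ := by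
  obtain ⟨u, rfl⟩ := hA
  rw [← Commute.units_inv_left_iff, ← Ring.inverse_unit, nonsing_inv_eq_ringInverse]
  exact h.ringInverse_ringInverse

section Sqrt

open scoped MatrixOrder

variable {n 𝕜 : Type*} [Fintype n] [DecidableEq n] [RCLike 𝕜] {A : Matrix n n 𝕜}

theorem Matrix.PosSemidef.sqrt_eq_cfcSqrt (hA : A.PosSemidef) : hA.sqrt = CFC.sqrt A := by
  rw [CFC.sqrt_eq_cfc, cfc_nnreal_eq_real _ A, hA.1.cfc_eq, Matrix.IsHermitian.cfc,
    Unitary.conjStarAlgAut_apply, Matrix.PosSemidef.sqrt]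
  congr 3
  funext i
  simp only [Function.comp_apply, Real.coe_sqrt, Real.coe_toNNReal _ (hA.eigenvalues_nonneg i)]

theorem Matrix.PosSemidef.commute_sqrt (hA : A.PosSemidef) {B : Matrix n n 𝕜}
    (h : Commute A B) : Commute hA.sqrt B := by
  rw [hA.sqrt_eq_cfcSqrt, CFC.sqrt_eq_cfc]
  exact h.cfc_nnreal _

end Sqrt

theorem anticommute_matrixSign {n : ℕ} {H Γ : Matrix (Fin n) (Fin n) ℂ} (hH : H.IsHermitian)
    (hΓ : IsUnit Γ) (h : Γ * H = -(H * Γ)) :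
    Γ * matrixSign H hH = -(matrixSign H hH * Γ) := by
  have hP : (H * H).PosSemidef := by
    simpa [hH.eq] using Matrix.posSemidef_conjTranspose_mul_self H
  have hsq : Commute Γ (H * H) := commute_mul_of_anticommute h h
  exact anticommute_mul_of_commute h
    (Matrix.commute_nonsing_inv_right hΓ (hP.commute_sqrt hsq.symm).symm)

theorem stmt_9_general {n : ℕ} (γ Γ : Matrix (Fin n) (Fin n) ℂ)
    (hΓ2 : Γ * Γ = 1)
    (hanti : γ * Γ = - (Γ * γ))
    (H : Matrix (Fin n) (Fin n) ℂ) (hH : H.IsHermitian)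
    (hchiral : Γ * H * Γ = -H)
    (V : Matrix (Fin n) (Fin n) ℂ) (hV : V = γ * matrixSign H hH) :
    Γ * V * Γ = V := by
  have hΓγ : Γ * γ = -(γ * Γ) := by rw [hanti, neg_neg]
  have hΓsgn : Γ * matrixSign H hH = -(matrixSign H hH * Γ) :=
    anticommute_matrixSign hH ⟨⟨Γ, Γ, hΓ2, hΓ2⟩, rfl⟩ (anticommute_of_mul_mul_eq_neg hΓ2 hchiral)
  rw [hV]
  exact mul_mul_eq_of_commute hΓ2 (commute_mul_of_anticommute hΓγ hΓsgn)

theorem stmt_9 {n : ℕ} (γ Γ : Matrix (Fin n) (Fin n) ℂ)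
    (hγ : γ.IsHermitian) (hΓ : Γ.IsHermitian) (hγ2 : γ * γ = 1) (hΓ2 : Γ * Γ = 1)
    (hanti : γ * Γ = - (Γ * γ))
    (H : Matrix (Fin n) (Fin n) ℂ) (hH : H.IsHermitian) (hHinv : IsUnit H.det)
    (hchiral : Γ * H * Γ = -H)
    (V : Matrix (Fin n) (Fin n) ℂ) (hV : V = γ * matrixSign H hH) :
    Γ * V * Γ = V :=
  stmt_9_general γ Γ hΓ2 hanti H hH hchiral V hV
end

section
/- Let N ≥ 2 and k ≥ 1 be integers, and let α, α̃, β, β̃ be k×k complex matrices with α and β invertible. Let M be the Nk×Nk block matrix with N×N blocks of size k given by: M(i,i) = α for 0 ≤ i ≤ N-2, M(N-1, N-1) = α̃, M(i, i-1) = β for 1 ≤ i ≤ N-1, M(0, N-1) = β̃, and all other blocks zero. Then det M = (det α)^N · det( α⁻¹ α̃ - (-α⁻¹ β)^N · β⁻¹ β̃ ). -/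
open Matrix

namespace Stmt15Aux

variable {N k : ℕ}

def blk (f : Fin N → Fin N → Matrix (Fin k) (Fin k) ℂ) :
    Matrix (Fin N × Fin k) (Fin N × Fin k) ℂ :=
  fun p q => f p.1 q.1 p.2 q.2

lemma blk_mul (f g : Fin N → Fin N → Matrix (Fin k) (Fin k) ℂ) :
    blk f * blk g = blk fun i j => ∑ m, f i m * g m j := by
  ext p q
  simp only [blk, Matrix.mul_apply, Fintype.sum_prod_type, Matrix.sum_apply]

lemma det_blk_upper (f : Fin N → Fin N → Matrix (Fin k) (Fin k) ℂ)
    (h : ∀ i j : Fin N, j < i → f i j = 0) :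
    (blk f).det = ∏ i, (f i i).det := by
  have hbt : (blk f).BlockTriangular Prod.fst := by
    intro p q hlt
    show f p.1 q.1 p.2 q.2 = _
    rw [h p.1 q.1 hlt]
    rfl
  rw [Matrix.BlockTriangular.det_fintype hbt]
  refine Finset.prod_congr rfl fun i _ => ?_
  let e : Fin k ≃ {p : Fin N × Fin k // p.1 = i} :=
    { toFun := fun x => ⟨(i, x), rfl⟩
      invFun := fun p => p.1.2
      left_inv := fun x => rfl
      right_inv := fun p => Subtype.ext (Prod.ext p.2.symm rfl) }
  rw [← Matrix.det_submatrix_equiv_self e]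
  congr 1

lemma det_blk_lower (f : Fin N → Fin N → Matrix (Fin k) (Fin k) ℂ)
    (h : ∀ i j : Fin N, i < j → f i j = 0) :
    (blk f).det = ∏ i, (f i i).det := by
  rw [← Matrix.det_transpose]
  have ht : (blk f)ᵀ = blk fun i j => (f j i)ᵀ := by
    ext p q; rfl
  rw [ht, det_blk_upper _ fun i j hij => by rw [h j i hij, Matrix.transpose_zero]]
  simp [Matrix.det_transpose]

end Stmt15Aux

open Stmt15Aux in
theorem stmt_15 {N k : ℕ} (hN : 2 ≤ N) (hk : 1 ≤ k)
    (α α' β β' : Matrix (Fin k) (Fin k) ℂ)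
    (hα : IsUnit α.det) (hβ : IsUnit β.det)
    (M : Matrix (Fin N × Fin k) (Fin N × Fin k) ℂ)
    (hM : ∀ p q : Fin N × Fin k, M p q =
      if p.1 = q.1 then
        (if (p.1 : ℕ) < N - 1 then α p.2 q.2 else α' p.2 q.2)
      else if (p.1 : ℕ) = (q.1 : ℕ) + 1 then β p.2 q.2
      else if (p.1 : ℕ) = 0 ∧ (q.1 : ℕ) = N - 1 then β' p.2 q.2
      else 0) :
    M.det = α.det ^ N * (α⁻¹ * α' - (-(α⁻¹ * β)) ^ N * (β⁻¹ * β')).det := by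
  classical
  set a : Matrix (Fin k) (Fin k) ℂ := -(α⁻¹ * β) with ha
  set c : Matrix (Fin k) (Fin k) ℂ := α⁻¹ * β' with hc
  set Z : Matrix (Fin k) (Fin k) ℂ := α⁻¹ * α' - a ^ N * (β⁻¹ * β') with hZ
  set FL : Fin N → Fin N → Matrix (Fin k) (Fin k) ℂ :=
    fun i j => if i = j then α else if (i : ℕ) = (j : ℕ) + 1 then β else 0 with hFL
  set FU : Fin N → Fin N → Matrix (Fin k) (Fin k) ℂ :=
    fun i j => if i = j ∧ (j : ℕ) < N - 1 then 1
      else if (j : ℕ) = N - 1 then (if (i : ℕ) = N - 1 then Z else a ^ (i : ℕ) * c)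
      else 0 with hFU
  have hαα : α * α⁻¹ = 1 := Matrix.mul_nonsing_inv α hα
  have hββ : β * β⁻¹ = 1 := Matrix.mul_nonsing_inv β hβ
  have hαc : α * c = β' := by rw [hc, ← mul_assoc, hαα, one_mul]
  have hαa : α * a = -β := by rw [ha, mul_neg, ← mul_assoc, hαα, one_mul]
  have hstep : ∀ n : ℕ, α * (a ^ (n + 1) * c) + β * (a ^ n * c) = 0 := by
    intro n
    rw [pow_succ', mul_assoc, ← mul_assoc α, hαa, neg_mul, neg_add_cancel]
  have hlast : α * Z + β * (a ^ (N - 2) * c) = α' := by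
    have h2 : a ^ N = a * a ^ (N - 2) * a := by
      conv_lhs => rw [show N = 1 + (N - 2) + 1 by omega]
      rw [pow_add, pow_add, pow_one]
    have had : a * (β⁻¹ * β') = -c := by
      rw [ha, hc, neg_mul, ← mul_assoc, mul_assoc α⁻¹, hββ, mul_one]
    have hcross : α * (a ^ N * (β⁻¹ * β')) = β * (a ^ (N - 2) * c) := by
      rw [h2, mul_assoc (a * a ^ (N - 2)) a (β⁻¹ * β'), had, mul_neg, mul_neg,
        mul_assoc a, ← mul_assoc α, hαa, neg_mul, neg_neg]
    rw [hZ, mul_sub, ← mul_assoc, hαα, one_mul, hcross]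
    abel
  have sum_FL : ∀ (g : Fin N → Matrix (Fin k) (Fin k) ℂ) (i : Fin N),
      ∑ m, FL i m * g m = α * g i +
        if _ : (i : ℕ) = 0 then 0
        else β * g ⟨(i : ℕ) - 1, Nat.lt_of_le_of_lt (Nat.sub_le _ _) i.isLt⟩ := by
    intro g i
    have hsplit : ∀ m : Fin N, FL i m * g m =
        (if i = m then α * g m else 0) + (if (i : ℕ) = (m : ℕ) + 1 then β * g m else 0) := by
      intro m
      by_cases h1 : i = m
      · subst h1
        simp [hFL]
      · by_cases h2 : (i : ℕ) = (m : ℕ) + 1 <;> simp [hFL, h1, h2]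
    rw [Finset.sum_congr rfl fun m _ => hsplit m, Finset.sum_add_distrib]
    congr 1
    · simp
    · by_cases h0 : (i : ℕ) = 0
      · rw [dif_pos h0]
        exact Finset.sum_eq_zero fun m _ => if_neg (by omega)
      · rw [dif_neg h0, Finset.sum_eq_single
          (⟨(i : ℕ) - 1, Nat.lt_of_le_of_lt (Nat.sub_le _ _) i.isLt⟩ : Fin N)]
        · rw [if_pos (by simp; omega)]
        · intro m _ hm
          refine if_neg fun hcon => hm (Fin.ext ?_)
          simp
          omega
        · exact fun h => absurd (Finset.mem_univ _) h
  have key : ∀ i j : Fin N, (∑ m, FL i m * FU m j) =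
      (if i = j then (if (i : ℕ) < N - 1 then α else α')
       else if (i : ℕ) = (j : ℕ) + 1 then β
       else if (i : ℕ) = 0 ∧ (j : ℕ) = N - 1 then β' else 0) := by
    intro i j
    have hiN := i.isLt
    have hjN := j.isLt
    rw [sum_FL]
    by_cases hj : (j : ℕ) = N - 1
    · have hFUj : ∀ m : Fin N, FU m j = if (m : ℕ) = N - 1 then Z else a ^ (m : ℕ) * c := by
        intro m
        simp only [hFU]
        rw [if_neg (fun hcon => by omega), if_pos hj]
      rw [hFUj i]
      by_cases h0 : (i : ℕ) = 0
      · rw [dif_pos h0, add_zero, if_neg (by omega), h0, pow_zero, one_mul, hαc,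
          if_neg (by rw [Fin.ext_iff]; omega), if_neg (by omega), if_pos (by omega)]
      · rw [dif_neg h0, hFUj ⟨(i : ℕ) - 1, Nat.lt_of_le_of_lt (Nat.sub_le _ _) i.isLt⟩]
        by_cases hi1 : (i : ℕ) = N - 1
        · rw [if_pos hi1, if_neg (show ¬((⟨(i : ℕ) - 1, _⟩ : Fin N) : ℕ) = N - 1 by
            simp; omega), show ((⟨(i : ℕ) - 1, Nat.lt_of_le_of_lt (Nat.sub_le _ _) i.isLt⟩ :
              Fin N) : ℕ) = N - 2 by simp; omega,
            if_pos (by rw [Fin.ext_iff]; omega), if_neg (by omega)]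
          exact hlast
        · rw [if_neg hi1, if_neg (show ¬((⟨(i : ℕ) - 1, _⟩ : Fin N) : ℕ) = N - 1 by
            simp; omega),
            if_neg (by rw [Fin.ext_iff]; omega), if_neg (by omega), if_neg (by omega)]
          have h := hstep ((i : ℕ) - 1)
          rw [show (i : ℕ) - 1 + 1 = (i : ℕ) by omega] at h
          exact h
    · have hFUj : ∀ m : Fin N, FU m j = if m = j then 1 else 0 := by
        intro m
        simp only [hFU]
        by_cases hmj : m = j
        · rw [if_pos ⟨hmj, by omega⟩, if_pos hmj]
        · rw [if_neg (fun hcon => hmj hcon.1), if_neg hj, if_neg hmj]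
      rw [hFUj i]
      by_cases hij : i = j
      · rw [if_pos hij, mul_one, if_pos hij, if_pos (by omega)]
        by_cases h0 : (i : ℕ) = 0
        · rw [dif_pos h0, add_zero]
        · rw [dif_neg h0, hFUj _, if_neg (by rw [Fin.ext_iff]; simp; omega),
            mul_zero, add_zero]
      · rw [if_neg hij, mul_zero, zero_add, if_neg hij]
        have hvij : ¬(i : ℕ) = (j : ℕ) := fun h => hij (Fin.ext h)
        by_cases h0 : (i : ℕ) = 0
        · rw [dif_pos h0, if_neg (by omega), if_neg (by omega)]
        · rw [dif_neg h0, hFUj _]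
          by_cases hij1 : (i : ℕ) = (j : ℕ) + 1
          · rw [if_pos (by rw [Fin.ext_iff]; simp; omega), mul_one, if_pos hij1]
          · rw [if_neg (by rw [Fin.ext_iff]; simp; omega), mul_zero,
              if_neg hij1, if_neg (by omega)]
  have hMeq : M = blk FL * blk FU := by
    rw [blk_mul]
    ext p q
    rw [hM p q]
    simp only [blk]
    rw [key p.1 q.1]
    split_ifs <;> simp
  have hdetL : (blk FL).det = α.det ^ N := by
    rw [det_blk_lower]
    · have hd : ∀ i : Fin N, FL i i = α := fun i => by simp [hFL]
      simp [hd, Finset.prod_const, Finset.card_univ]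
    · intro i j hij
      have hv : (i : ℕ) < (j : ℕ) := hij
      simp only [hFL]
      rw [if_neg (Fin.ne_of_lt hij), if_neg (by omega)]
  have hdetU : (blk FU).det = Z.det := by
    rw [det_blk_upper]
    · have hdiag : ∀ i : Fin N, (FU i i).det = if (i : ℕ) = N - 1 then Z.det else 1 := by
        intro i
        have hiN := i.isLt
        by_cases h : (i : ℕ) = N - 1
        · simp only [hFU]
          rw [if_neg (fun hcon => by omega), if_pos h, if_pos h, if_pos h]
        · simp only [hFU]
          rw [if_pos (show True ∧ (i : ℕ) < N - 1 from ⟨trivial, by omega⟩), if_neg h, Matrix.det_one]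
      rw [Finset.prod_congr rfl fun i _ => hdiag i,
        Finset.prod_eq_single (⟨N - 1, by omega⟩ : Fin N)]
      · rw [if_pos rfl]
      · intro m _ hm
        exact if_neg fun h => hm (Fin.ext (by simp; omega))
      · exact fun h => absurd (Finset.mem_univ _) h
    · intro i j hij
      have hv : (j : ℕ) < (i : ℕ) := hij
      have hiN := i.isLt
      simp only [hFU]
      rw [if_neg (fun hcon => by have := congrArg Fin.val hcon.1; omega), if_neg (by omega)]
  rw [hMeq, Matrix.det_mul, hdetL, hdetU]
end
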